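/- arXiv:1509.03059 — 4 statements merged into one kernel-verified Lean document; each statement's English description precedes it below -/
import Mathlib

section
/- Let k be a field and P ∈ k[X] a monic non-constant polynomial with P(0) = 0. If P(X+Y) lies in the ideal of k[X,Y] generated by P(X) and P(Y), then P is additive, i.e. P(X+Y) = P(X) + P(Y) in k[X,Y]. -/
/-! In `k[Y][X]` the polynomial `P(X)` is monic of degree `n = deg P`, `P(Y)` is a constant and
`P(X+Y) - P(X)` has degree `< n`. Reducing `b` modulo `P(X)` in `P(X+Y) = a P(X) + b P(Y)` forces
`a ≡ 1` and gives `P(Y) ∣ P(X+Y) - P(X)`; by the symmetry `X ↔ Y`, also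
`P(X) ∣ P(X+Y) - P(X) - P(Y)`. This last polynomial has degree `< n` in `X`, so it vanishes. -/

open Polynomial

namespace Polynomial

variable {R : Type*} [CommRing R]

theorem degree_taylor_sub_lt {p : R[X]} (hp : p ≠ 0) (r : R) :
    (taylor r p - p).degree < p.degree :=
  degree_sub_lt_right (degree_taylor p r) hp (leadingCoeff_taylor r p)

theorem C_dvd_sub_of_mem_span_pair [Nontrivial R] {f g : R[X]} {c : R} (hg : g.Monic)
    (hfg : (f - g).degree < g.degree) (hf : f ∈ Ideal.span {g, C c}) : C c ∣ f - g := by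
  obtain ⟨a, b, rfl⟩ := Ideal.mem_span_pair.mp hf
  have hrem : a * g + b * C c - g - b %ₘ g * C c = 0 := by
    by_contra hne
    refine hg.not_dvd_of_degree_lt hne ?_ ⟨a + b /ₘ g * C c - 1, ?_⟩
    · refine (degree_sub_le _ _).trans_lt (max_lt hfg ?_)
      exact (degree_mul_le_of_le le_rfl degree_C_le).trans_lt
        (by simpa using degree_modByMonic_lt b hg)
    · linear_combination -C c * modByMonic_add_div b g
  exact ⟨b %ₘ g, by linear_combination hrem⟩

end Polynomial

section
variable {k : Type*} [CommRing k]

local notation "X₀" => (MvPolynomial.X 0 : MvPolynomial (Fin 2) k)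
local notation "X₁" => (MvPolynomial.X 1 : MvPolynomial (Fin 2) k)

theorem finSuccEquiv_aeval_X_zero (P : k[X]) :
    MvPolynomial.finSuccEquiv k 1 (aeval X₀ P) = P.map (algebraMap k _) := by
  rw [← aeval_algHom_apply, MvPolynomial.finSuccEquiv_X_zero,
    ← aeval_map_algebraMap (MvPolynomial (Fin 1) k), aeval_X_left_apply]

theorem finSuccEquiv_aeval_X_one (P : k[X]) :
    MvPolynomial.finSuccEquiv k 1 (aeval X₁ P) = C (aeval (MvPolynomial.X 0) P) := by
  rw [← aeval_algHom_apply, show (1 : Fin 2) = Fin.succ 0 from rfl,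
    MvPolynomial.finSuccEquiv_X_succ]
  exact aeval_algHom_apply CAlgHom _ _

theorem finSuccEquiv_aeval_X_zero_add_X_one (P : k[X]) :
    MvPolynomial.finSuccEquiv k 1 (aeval (X₀ + X₁) P) =
      taylor (MvPolynomial.X 0) (P.map (algebraMap k _)) := by
  rw [← aeval_algHom_apply, map_add, MvPolynomial.finSuccEquiv_X_zero,
    show (1 : Fin 2) = Fin.succ 0 from rfl, MvPolynomial.finSuccEquiv_X_succ, taylor_apply,
    comp_eq_aeval, aeval_map_algebraMap]

variable [Nontrivial k] {P : k[X]} (hP : P.Monic)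
include hP

theorem aeval_X_one_dvd_sub_of_mem_span
    (hmem : aeval (X₀ + X₁) P ∈ Ideal.span {aeval X₀ P, aeval X₁ P}) :
    aeval X₁ P ∣ aeval (X₀ + X₁) P - aeval X₀ P := by
  have hmap := Ideal.mem_map_of_mem (MvPolynomial.finSuccEquiv k 1) hmem
  rw [Ideal.map_span, Set.image_pair] at hmap
  rw [← map_dvd_iff (MvPolynomial.finSuccEquiv k 1), map_sub]
  simp only [finSuccEquiv_aeval_X_zero, finSuccEquiv_aeval_X_one,
    finSuccEquiv_aeval_X_zero_add_X_one] at hmap ⊢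
  exact C_dvd_sub_of_mem_span_pair (hP.map _) (degree_taylor_sub_lt (hP.map _).ne_zero _) hmap

theorem aeval_X_zero_add_X_one_eq_of_dvd (hdeg : 0 < P.natDegree)
    (hdvd : aeval X₀ P ∣ aeval (X₀ + X₁) P - aeval X₁ P) :
    aeval (X₀ + X₁) P = aeval X₀ P + aeval X₁ P := by
  have hQ := hP.map (algebraMap k (MvPolynomial (Fin 1) k))
  have hQ_pos : 0 < (P.map (algebraMap k (MvPolynomial (Fin 1) k))).degree :=
    natDegree_pos_iff_degree_pos.mp
      (hP.natDegree_map (algebraMap k (MvPolynomial (Fin 1) k)) ▸ hdeg)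
  have hdvd_map :=
    map_dvd (MvPolynomial.finSuccEquiv k 1) (dvd_sub hdvd (dvd_refl (aeval X₀ P)))
  rw [sub_right_comm] at hdvd_map
  rw [← sub_eq_zero, ← sub_sub]
  apply (MvPolynomial.finSuccEquiv k 1).injective
  simp only [map_zero, map_sub, finSuccEquiv_aeval_X_zero, finSuccEquiv_aeval_X_one,
    finSuccEquiv_aeval_X_zero_add_X_one] at hdvd_map ⊢
  by_contra hne
  refine hQ.not_dvd_of_degree_lt hne ?_ hdvd_map
  exact (degree_sub_le _ _).trans_lt
    (max_lt (degree_taylor_sub_lt hQ.ne_zero _) (degree_C_le.trans_lt hQ_pos))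

end

theorem additive_of_mem_span_general {k : Type*} [Field k] (P : Polynomial k)
    (hmonic : P.Monic) (hdeg : 0 < P.natDegree)
    (hmem : Polynomial.aeval (MvPolynomial.X 0 + MvPolynomial.X 1 : MvPolynomial (Fin 2) k) P ∈
      Ideal.span {Polynomial.aeval (MvPolynomial.X 0 : MvPolynomial (Fin 2) k) P,
                  Polynomial.aeval (MvPolynomial.X 1 : MvPolynomial (Fin 2) k) P}) :
    Polynomial.aeval (MvPolynomial.X 0 + MvPolynomial.X 1 : MvPolynomial (Fin 2) k) P =
      Polynomial.aeval (MvPolynomial.X 0 : MvPolynomial (Fin 2) k) P +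
      Polynomial.aeval (MvPolynomial.X 1 : MvPolynomial (Fin 2) k) P := by
  have hX₁ := aeval_X_one_dvd_sub_of_mem_span hmonic hmem
  have hX₀ := map_dvd (MvPolynomial.rename (Equiv.swap (0 : Fin 2) 1)) hX₁
  simp only [map_sub, ← aeval_algHom_apply, map_add, MvPolynomial.rename_X,
    Equiv.swap_apply_left, Equiv.swap_apply_right] at hX₀
  rw [add_comm] at hX₀
  exact aeval_X_zero_add_X_one_eq_of_dvd hmonic hdeg hX₀

/-- If `P` is a monic non-constant polynomial with `P(0) = 0` and `P(X+Y)` lies in the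
ideal of `k[X,Y]` generated by `P(X)` and `P(Y)`, then `P(X+Y) = P(X) + P(Y)`. -/
theorem additive_of_mem_span {k : Type*} [Field k] (P : Polynomial k)
    (hmonic : P.Monic) (hdeg : 0 < P.natDegree) (h0 : P.eval 0 = 0)
    (hmem : Polynomial.aeval (MvPolynomial.X 0 + MvPolynomial.X 1 : MvPolynomial (Fin 2) k) P ∈
      Ideal.span {Polynomial.aeval (MvPolynomial.X 0 : MvPolynomial (Fin 2) k) P,
                  Polynomial.aeval (MvPolynomial.X 1 : MvPolynomial (Fin 2) k) P}) :
    Polynomial.aeval (MvPolynomial.X 0 + MvPolynomial.X 1 : MvPolynomial (Fin 2) k) P =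
      Polynomial.aeval (MvPolynomial.X 0 : MvPolynomial (Fin 2) k) P +
      Polynomial.aeval (MvPolynomial.X 1 : MvPolynomial (Fin 2) k) P :=
  additive_of_mem_span_general P hmonic hdeg hmem
end

section
/- Let k be a field of characteristic p > 0 and a ∈ k an element that is not a p-th power in k. If x(t), y(t) ∈ k[t] satisfy y(t)^p = x(t) + a·x(t)^p, then both x(t) and y(t) are constant polynomials. -/
open Polynomial

/-! If `x` is non-constant, `a x^p` dominates `x` in degree, so comparing leading coefficients in
`y^p = x + a x^p` exhibits `a` as the `p`-th power `(lc y / lc x)^p`. Once `x` is constant, so is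
`y^p`, hence `y`. -/

namespace Polynomial

theorem degree_lt_degree_pow {R : Type*} [Semiring R] [NoZeroDivisors R] {x : R[X]} {n : ℕ}
    (hn : 1 < n) (hx : 0 < x.natDegree) : x.degree < (x ^ n).degree :=
  degree_lt_degree <| by rw [natDegree_pow]; exact lt_mul_left hx hn

theorem exists_pow_eq_of_pow_eq_add_C_mul_pow {K : Type*} [Field K] {n : ℕ} {a : K} {x y r : K[X]} (ha : a ≠ 0)
    (hx : x ≠ 0) (hr : r.degree < (x ^ n).degree) (h : y ^ n = r + C a * x ^ n) :
    ∃ c : K, c ^ n = a := by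
  have hlc : y.leadingCoeff ^ n = a * x.leadingCoeff ^ n := by
    rw [← leadingCoeff_pow, h, leadingCoeff_add_of_degree_lt (by rwa [degree_C_mul ha]),
      leadingCoeff_C_mul_of_isUnit ha.isUnit, leadingCoeff_pow]
  refine ⟨y.leadingCoeff / x.leadingCoeff, ?_⟩
  rw [div_pow, hlc, mul_div_cancel_right₀ _ (pow_ne_zero _ (leadingCoeff_ne_zero.mpr hx))]

end Polynomial

theorem wound_unipotent_no_line_general {k : Type*} [Field k] (p : ℕ) [Fact p.Prime]
    (a : k) (ha : ∀ c : k, c ^ p ≠ a) (x y : Polynomial k)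
    (h : y ^ p = x + Polynomial.C a * x ^ p) :
    (∃ c : k, x = Polynomial.C c) ∧ (∃ d : k, y = Polynomial.C d) := by
  have hp : 1 < p := (Fact.out : p.Prime).one_lt
  have ha0 : a ≠ 0 := by rintro rfl; exact ha 0 (zero_pow (by omega))
  have hx : x.natDegree = 0 := by
    by_contra hx
    have hx_pos : 0 < x.natDegree := Nat.pos_of_ne_zero hx
    obtain ⟨c, hc⟩ := exists_pow_eq_of_pow_eq_add_C_mul_pow ha0
      (ne_zero_of_natDegree_gt hx_pos) (degree_lt_degree_pow hp hx_pos) h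
    exact ha c hc
  have hy : y.natDegree = 0 := by
    have hyp : (y ^ p).natDegree = 0 := by
      rw [h, eq_C_of_natDegree_eq_zero hx, ← C_pow, ← C_mul, ← C_add, natDegree_C]
    rw [natDegree_pow] at hyp
    exact (mul_eq_zero.mp hyp).resolve_left (by omega)
  exact ⟨⟨_, eq_C_of_natDegree_eq_zero hx⟩, ⟨_, eq_C_of_natDegree_eq_zero hy⟩⟩

/-- If `a` is not a `p`-th power in `k` (char `k = p > 0`) and polynomials `x(t), y(t)`
satisfy `y(t)^p = x(t) + a·x(t)^p`, then `x(t)` and `y(t)` are constant. -/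
theorem wound_unipotent_no_line {k : Type*} [Field k] (p : ℕ) [Fact p.Prime] [CharP k p]
    (a : k) (ha : ∀ c : k, c ^ p ≠ a) (x y : Polynomial k)
    (h : y ^ p = x + Polynomial.C a * x ^ p) :
    (∃ c : k, x = Polynomial.C c) ∧ (∃ d : k, y = Polynomial.C d) :=
  wound_unipotent_no_line_general p a ha x y h
end

section
/- Let S be a submonoid of ℕ × ℕ (under componentwise addition) such that: (a) (ℓ, 0) ∉ S for every ℓ ≥ 1, and (b) for all positive integers p, q there exists a positive integer m with (m·q, m·p) ∈ S. Then S is not finitely generated. -/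
/-!
A finitely generated submonoid of `ℕ × ℕ` meeting the first axis only in `0` lies in a cone
`{(x, y) | x ≤ c * y}`: take `c` to be the largest first coordinate of a generator. Condition (b)
with `p = 1`, `q = c + 1` produces an element `(m * (c + 1), m)` outside that cone.
-/

def slopeCone (c : ℕ) : AddSubmonoid (ℕ × ℕ) where
  carrier := {s | s.1 ≤ c * s.2}
  add_mem' {s t} (hs : s.1 ≤ c * s.2) (ht : t.1 ≤ c * t.2) :=
    show s.1 + t.1 ≤ c * (s.2 + t.2) by rw [Nat.mul_add]; omega
  zero_mem' := by simp

theorem mem_slopeCone {c : ℕ} {s : ℕ × ℕ} : s ∈ slopeCone c ↔ s.1 ≤ c * s.2 := Iff.rfl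

theorem AddSubmonoid.FG.exists_le_slopeCone {S : AddSubmonoid (ℕ × ℕ)} (hS : S.FG)
    (haxis : ∀ s ∈ S, s.2 = 0 → s.1 = 0) : ∃ c, S ≤ slopeCone c := by
  obtain ⟨T, rfl⟩ := hS
  refine ⟨T.sup Prod.fst, AddSubmonoid.closure_le.mpr fun g hg => mem_slopeCone.mpr ?_⟩
  rcases Nat.eq_zero_or_pos g.2 with hg2 | hg2
  · simp [haxis g (AddSubmonoid.subset_closure hg) hg2]
  · calc g.1 ≤ T.sup Prod.fst := Finset.le_sup hg
      _ ≤ T.sup Prod.fst * g.2 := Nat.le_mul_of_pos_right _ hg2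

/-- A submonoid `S` of `ℕ × ℕ` avoiding the positive part of the first axis but whose
associated cone accumulates to the first axis is not finitely generated. -/
theorem submonoid_not_fg {S : AddSubmonoid (ℕ × ℕ)}
    (ha : ∀ ℓ : ℕ, 1 ≤ ℓ → (ℓ, 0) ∉ S)
    (hb : ∀ p q : ℕ, 0 < p → 0 < q → ∃ m : ℕ, 0 < m ∧ (m * q, m * p) ∈ S) :
    ¬ S.FG := by
  intro hS
  have haxis : ∀ s ∈ S, s.2 = 0 → s.1 = 0 := by
    rintro ⟨x, y⟩ hs (rfl : y = 0)
    by_contra hx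
    exact ha x (Nat.one_le_iff_ne_zero.mpr hx) hs
  obtain ⟨c, hc⟩ := hS.exists_le_slopeCone haxis
  obtain ⟨m, hm, hmS⟩ := hb 1 (c + 1) one_pos c.succ_pos
  have hcone : m * (c + 1) ≤ c * (m * 1) := mem_slopeCone.mp (hc hmS)
  nlinarith
end

section
/- Let k be a perfect field and R a finite-dimensional local commutative k-algebra with maximal ideal m and residue field K = R/m. Then the quotient map R → K admits a k-algebra section, i.e. there is a k-algebra homomorphism s : K → R with (R → K) ∘ s = id. Consequently K lifts to a subfield of R. -/
/-! The maximal ideal `m` of the Artinian ring `R` is nilpotent, and `K = R ⧸ m` is a finite,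
hence separable, extension of the perfect field `k`, so `K` is formally étale over `k`. Formal
smoothness lifts the identity `K → R ⧸ m` through the nilpotent thickening `R → R ⧸ m`. -/

open IsLocalRing

theorem IsLocalRing.exists_residue_section_of_formallySmooth {k R : Type*} [CommRing k]
    [CommRing R] [Algebra k R] [IsLocalRing R] [Algebra.FormallySmooth k (ResidueField R)]
    (hm : IsNilpotent (maximalIdeal R)) :
    ∃ s : ResidueField R →ₐ[k] R, ∀ x, residue R (s x) = x :=
  ⟨Algebra.FormallySmooth.lift _ hm (AlgHom.id k (ResidueField R)),
    Algebra.FormallySmooth.mk_lift _ hm _⟩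

/-- Over a perfect field `k`, the residue field of a finite-dimensional local commutative
`k`-algebra lifts: the quotient map `R → R/m` admits a `k`-algebra section. -/
theorem residue_field_lifts {k R : Type*} [Field k] [PerfectField k] [CommRing R]
    [Algebra k R] [IsLocalRing R] [FiniteDimensional k R] :
    ∃ s : IsLocalRing.ResidueField R →ₐ[k] R,
      ∀ x : IsLocalRing.ResidueField R, IsLocalRing.residue R (s x) = x := by
  have : IsArtinianRing R := isArtinian_of_tower k inferInstance
  exact exists_residue_section_of_formallySmooth
    ((isArtinianRing_iff_isNilpotent_maximalIdeal R).mp ‹_›)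
end
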